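/- Let R be an object unital G-graded ring and M a graded left R-module. If the underlying ungraded module U(M) is semisimple as an R-module, then M is semisimple in the graded category (every graded submodule of M is a graded direct summand). -/

import Mathlib

open CategoryTheory

/-- The arrows of a groupoid, bundled with their endpoints. -/
abbrev GArrow (G : Type*) [Groupoid G] := Σ a b : G, a ⟶ b

namespace GArrow

variable {G : Type*} [Groupoid G]

/-- The unit arrow at an object. -/
def unit (a : G) : GArrow G := ⟨a, a, 𝟙 a⟩

/-- The inverse arrow `σ⁻¹`. -/
def ginv (σ : GArrow G) : GArrow G := ⟨σ.2.1, σ.1, Groupoid.inv σ.2.2⟩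

/-- `Composable σ τ` means `d(σ) = r(τ)`, i.e. the product `στ` is defined. -/
def Composable (σ τ : GArrow G) : Prop := σ.1 = τ.2.1

/-- The product `στ` when `d(σ) = r(τ)`. -/
def comp (σ τ : GArrow G) (h : Composable σ τ) : GArrow G :=
  ⟨τ.1, σ.2.1, τ.2.2 ≫ eqToHom h.symm ≫ σ.2.2⟩

/-- The unit space `G₀`, as a set of arrows. -/
def GUnits (G : Type*) [Groupoid G] : Set (GArrow G) := Set.range unit

/-- The product of two sets of arrows: `Σ * Σ' = { στ : σ ∈ Σ, τ ∈ Σ', d(σ) = r(τ) }`. -/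
def setMul (A B : Set (GArrow G)) : Set (GArrow G) :=
  {ρ | ∃ σ ∈ A, ∃ τ ∈ B, ∃ h : Composable σ τ, ρ = comp σ τ h}

end GArrow

/-- An object unital `G`-grading on an associative, not necessarily unital, ring `R`:
`R = ⊕_{σ ∈ G} R_σ`, `R_σ R_τ ⊆ R_{στ}` for composable pairs, `R_σ R_τ = 0` otherwise,
each `R_e` (`e ∈ G₀`) is unital with identity `u e`, and
`1_{R_{r(σ)}} r = r 1_{R_{d(σ)}} = r` for every `r ∈ R_σ`. -/
structure OUGrading (G : Type*) [Groupoid G] (R : Type*) [NonUnitalRing R] where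
  component : GArrow G → AddSubgroup R
  sup_eq_top : (⨆ σ : GArrow G, component σ) = ⊤
  indep : iSupIndep component
  mul_mem : ∀ (σ τ : GArrow G) (h : GArrow.Composable σ τ), ∀ r ∈ component σ,
    ∀ s ∈ component τ, r * s ∈ component (GArrow.comp σ τ h)
  mul_eq_zero : ∀ (σ τ : GArrow G), ¬ GArrow.Composable σ τ → ∀ r ∈ component σ,
    ∀ s ∈ component τ, r * s = 0
  /-- The identity of the unital ring `R_e`, for each object (unit) `e`. -/
  u : G → R
  u_mem : ∀ a : G, u a ∈ component (GArrow.unit a)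
  u_left : ∀ σ : GArrow G, ∀ r ∈ component σ, u σ.2.1 * r = r
  u_right : ∀ σ : GArrow G, ∀ r ∈ component σ, r * u σ.1 = r

/-- The axioms of a left module over a not necessarily unital ring. -/
structure NUModule (R M : Type*) [NonUnitalRing R] [AddCommGroup M] [SMul R M] : Prop where
  smul_add : ∀ (r : R) (m n : M), r • (m + n) = r • m + r • n
  add_smul : ∀ (r s : R) (m : M), (r + s) • m = r • m + s • m
  mul_smul : ∀ (r s : R) (m : M), (r * s) • m = r • (s • m)

/-- A `G`-graded left module over a ring `R` with object unital `G`-grading `gr`. -/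
structure GrModule {G : Type*} [Groupoid G] {R : Type*} [NonUnitalRing R]
    (gr : OUGrading G R) (M : Type*) [AddCommGroup M] [SMul R M] where
  smul_add : ∀ (r : R) (m n : M), r • (m + n) = r • m + r • n
  add_smul : ∀ (r s : R) (m : M), (r + s) • m = r • m + s • m
  mul_smul : ∀ (r s : R) (m : M), (r * s) • m = r • (s • m)
  component : GArrow G → AddSubgroup M
  sup_eq_top : (⨆ σ : GArrow G, component σ) = ⊤
  indep : iSupIndep component
  smul_mem : ∀ (σ τ : GArrow G) (h : GArrow.Composable σ τ), ∀ r ∈ gr.component σ,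
    ∀ m ∈ component τ, r • m ∈ component (GArrow.comp σ τ h)
  smul_eq_zero : ∀ (σ τ : GArrow G), ¬ GArrow.Composable σ τ → ∀ r ∈ gr.component σ,
    ∀ m ∈ component τ, r • m = 0

/-- A graded module is graded unital if `1_{R_{r(σ)}} • m = m` for all homogeneous `m`
of degree `σ`. -/
def GrModule.IsUnital {G : Type*} [Groupoid G] {R : Type*} [NonUnitalRing R]
    {gr : OUGrading G R} {M : Type*} [AddCommGroup M] [SMul R M]
    (gm : GrModule gr M) : Prop :=
  ∀ σ : GArrow G, ∀ m ∈ gm.component σ, gr.u σ.2.1 • m = m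

/-- A graded homomorphism between graded modules with homogeneous components `cM`, `cN`. -/
def IsGrHom {G : Type*} [Groupoid G] {R : Type*} [NonUnitalRing R]
    {M N : Type*} [AddCommGroup M] [AddCommGroup N] [SMul R M] [SMul R N]
    (cM : GArrow G → AddSubgroup M) (cN : GArrow G → AddSubgroup N) (f : M → N) : Prop :=
  (∀ x y : M, f (x + y) = f x + f y) ∧ (∀ (r : R) (x : M), f (r • x) = r • f x) ∧
    (∀ σ : GArrow G, ∀ x ∈ cM σ, f x ∈ cN σ)

/-- A graded submodule: an additive subgroup closed under the `R`-action which is the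
sum of its homogeneous components. -/
def IsGrSubmodule {G : Type*} [Groupoid G] {R : Type*} [NonUnitalRing R]
    {gr : OUGrading G R} {M : Type*} [AddCommGroup M] [SMul R M]
    (gm : GrModule gr M) (N : AddSubgroup M) : Prop :=
  (∀ (r : R), ∀ m ∈ N, r • m ∈ N) ∧ N = ⨆ σ : GArrow G, (N ⊓ gm.component σ)

open Classical in
/-- The homogeneous component of degree `τ` of the `σ'`-suspension `R(σ')`:
`R(σ')_τ = R_{τσ'}` if `(τ, σ')` is composable and `{0}` otherwise. -/
noncomputable def suspComponent {G : Type*} [Groupoid G] {R : Type*} [NonUnitalRing R]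
    (gr : OUGrading G R) (σ' τ : GArrow G) : AddSubgroup R :=
  if h : GArrow.Composable τ σ' then gr.component (GArrow.comp τ σ' h) else ⊥

/-- The `σ'`-suspension `R(σ') = ⊕_τ R(σ')_τ` of `R`, as an additive subgroup of `R`. -/
noncomputable def suspension {G : Type*} [Groupoid G] {R : Type*} [NonUnitalRing R]
    (gr : OUGrading G R) (σ' : GArrow G) : AddSubgroup R :=
  ⨆ τ : GArrow G, suspComponent gr σ' τ

/-- A graded homomorphism from a graded left ideal `S` of `R` (with homogeneous
components `cS`) to a graded module with components `cN`. -/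
def IsGrHomOn {G : Type*} [Groupoid G] {R N : Type*} [NonUnitalRing R]
    [AddCommGroup N] [SMul R N] {S : AddSubgroup R}
    (cS : GArrow G → AddSubgroup R) (cN : GArrow G → AddSubgroup N) (f : ↥S → N) : Prop :=
  (∀ x y : ↥S, f (x + y) = f x + f y) ∧
  (∀ (r : R) (x y : ↥S), (y : R) = r * (x : R) → f y = r • f x) ∧
  (∀ τ : GArrow G, ∀ x : ↥S, (x : R) ∈ cS τ → f x ∈ cN τ)

/-- A graded module is free by suspension if it is the internal direct sum of graded
submodules, each gradedly isomorphic to a suspension `R(σᵢ)` of `R`. -/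
noncomputable def FreeBySuspension {G : Type*} [Groupoid G] {R : Type*} [NonUnitalRing R]
    {gr : OUGrading G R} {M : Type*} [AddCommGroup M] [SMul R M]
    (gm : GrModule gr M) : Prop :=
  ∃ (ι : Type*) (σs : ι → GArrow G) (f : ∀ i : ι, ↥(suspension gr (σs i)) → M),
    (∀ i : ι, IsGrHomOn (suspComponent gr (σs i)) gm.component (f i)) ∧
    (∀ i : ι, Function.Injective (f i)) ∧
    iSupIndep (fun i : ι => AddSubgroup.closure (Set.range (f i))) ∧
    (⨆ i : ι, AddSubgroup.closure (Set.range (f i))) = ⊤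

/-- The set of graded homomorphisms `R → N` of degree `σ`. -/
def HomDeg {G : Type*} [Groupoid G] {R N : Type*} [NonUnitalRing R]
    [AddCommGroup N] [SMul R N] (gr : OUGrading G R)
    (cN : GArrow G → AddSubgroup N) (σ : GArrow G) : Set (R → N) :=
  {f | (∀ x y : R, f (x + y) = f x + f y) ∧ (∀ r x : R, f (r * x) = r • f x) ∧
    (∀ (τ : GArrow G) (h : GArrow.Composable τ σ), ∀ x ∈ gr.component τ,
        f x ∈ cN (GArrow.comp τ σ h)) ∧
    (∀ τ : GArrow G, ¬ GArrow.Composable τ σ → ∀ x ∈ gr.component τ, f x = 0)}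

/-- `HOM_R(R, N) = ⊕_σ HOM_R(R, N)_σ`, the additive group generated by the graded
homomorphisms of some degree. -/
def HOM {G : Type*} [Groupoid G] {R N : Type*} [NonUnitalRing R]
    [AddCommGroup N] [SMul R N] (gr : OUGrading G R)
    (cN : GArrow G → AddSubgroup N) : AddSubgroup (R → N) :=
  AddSubgroup.closure (⋃ σ : GArrow G, HomDeg gr cN σ)

/-- The left `R`-action `(r · f)(x) = f(x r)` on maps `R → N`. -/
def rAct {R N : Type*} [NonUnitalRing R] (r : R) (f : R → N) : R → N :=
  fun x => f (x * r)

/-- `R · HOM_R(R, N)`, the unitary part of `HOM_R(R, N)` under the action `rAct`. -/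
def RHOM {G : Type*} [Groupoid G] {R N : Type*} [NonUnitalRing R]
    [AddCommGroup N] [SMul R N] (gr : OUGrading G R)
    (cN : GArrow G → AddSubgroup N) : AddSubgroup (R → N) :=
  AddSubgroup.closure {g | ∃ (r : R), ∃ f ∈ HOM gr cN, g = rAct r f}

/-- A bundled graded unital left `R`-module. -/
structure GrUMod {G : Type*} [Groupoid G] {R : Type*} [NonUnitalRing R]
    (gr : OUGrading G R) where
  carrier : Type*
  [acg : AddCommGroup carrier]
  [sm : SMul R carrier]
  str : GrModule gr carrier
  unital : str.IsUnital

attribute [instance] GrUMod.acg GrUMod.sm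

/-! The projection `π` of `U(M)` onto `N` along an ungraded complement is an `R`-linear
retraction. Writing `p_σ` for the projection of `M` onto `M_σ`, its graded part
`x ↦ ∑_σ p_σ (π (p_σ x))` is again an `R`-linear retraction onto `N` (as `N` is graded), and it
preserves degrees, so its kernel is a graded complement of `N`. Linearity survives because
`p_{ρσ} (r • x) = r • p_σ x` for `r ∈ R_ρ`, which rests on left cancellation in the groupoid. -/

theorem GArrow.comp_left_cancel {G : Type*} [Groupoid G] {ρ τ σ : GArrow G}
    (hτ : GArrow.Composable ρ τ) (hσ : GArrow.Composable ρ σ)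
    (h : GArrow.comp ρ τ hτ = GArrow.comp ρ σ hσ) : τ = σ := by
  obtain ⟨a, b, f⟩ := ρ
  obtain ⟨c, d, g⟩ := τ
  obtain ⟨c', d', g'⟩ := σ
  obtain rfl : a = d := hτ
  obtain rfl : a = d' := hσ
  simp only [GArrow.comp, eqToHom_refl, Category.id_comp] at h
  obtain ⟨rfl, h⟩ := Sigma.mk.inj_iff.mp h
  obtain ⟨-, h⟩ := Sigma.mk.inj_iff.mp (eq_of_heq h)
  obtain rfl : g = g' := (cancel_mono f).mp (eq_of_heq h)
  rfl

namespace AddSubgroup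

variable {M : Type*} [AddCommGroup M] {N C : AddSubgroup M}

theorem exists_retraction_of_isCompl (h : IsCompl N C) :
    ∃ π : M →+ M, (∀ m, π m ∈ N) ∧ (∀ n ∈ N, π n = n) ∧ ∀ c ∈ C, π c = 0 := by
  have h' := AddSubgroup.toIntSubmodule.isCompl h
  exact ⟨(Submodule.projection _ _ h').toAddMonoidHom, Submodule.projection_apply_mem h',
    fun _ hn => Submodule.projection_apply_of_mem_left h' hn,
    fun _ hc => Submodule.projection_apply_of_mem_right h' hc⟩

theorem isCompl_ker_of_retraction {f : M →+ M} (hmem : ∀ m, f m ∈ N)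
    (hfix : ∀ n ∈ N, f n = n) : IsCompl N f.ker := by
  refine ⟨disjoint_iff.2 (eq_bot_iff.2 fun m hm => ?_),
    codisjoint_iff.2 (eq_top_iff.2 fun m _ => ?_)⟩
  · obtain ⟨hmN, hmker⟩ := mem_inf.1 hm
    rw [mem_bot, ← hfix m hmN]
    exact hmker
  · have hker : m - f m ∈ f.ker := by
      rw [AddMonoidHom.mem_ker, map_sub, hfix _ (hmem m), sub_self]
    simpa using add_mem_sup (hmem m) hker

theorem map_smul_of_retraction {R : Type*} [SMul R M]
    (hsmul_add : ∀ (r : R) (m n : M), r • (m + n) = r • m + r • n)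
    (hN : ∀ (r : R), ∀ m ∈ N, r • m ∈ N) (hC : ∀ (r : R), ∀ m ∈ C, r • m ∈ C) (hNC : N ⊔ C = ⊤)
    {π : M →+ M} (hfix : ∀ n ∈ N, π n = n) (hkill : ∀ c ∈ C, π c = 0) (r : R) (m : M) :
    π (r • m) = r • π m := by
  obtain ⟨n, hn, c, hc, rfl⟩ := mem_sup.1 (hNC ▸ mem_top m)
  rw [hsmul_add, map_add, map_add, hfix _ (hN r n hn), hkill _ (hC r c hc), hfix n hn,
    hkill c hc, add_zero, add_zero]

end AddSubgroup

theorem OUGrading.induction_on {G R : Type*} [Groupoid G] [NonUnitalRing R] (gr : OUGrading G R)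
    {motive : R → Prop} (r : R) (homogeneous : ∀ ρ, ∀ s ∈ gr.component ρ, motive s)
    (zero : motive 0) (add : ∀ s t, motive s → motive t → motive (s + t)) : motive r :=
  AddSubgroup.iSup_induction (C := motive) _ (gr.sup_eq_top ▸ AddSubgroup.mem_top r)
    homogeneous zero add

namespace GrModule

open Classical DirectSum

variable {G R M : Type*} [Groupoid G] [NonUnitalRing R] [AddCommGroup M] [SMul R M]
  {gr : OUGrading G R}

protected theorem smul_zero (gm : GrModule gr M) (r : R) : r • (0 : M) = 0 := by
  simpa using gm.smul_add r 0 0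

protected theorem zero_smul (gm : GrModule gr M) (m : M) : (0 : R) • m = 0 := by
  simpa using gm.add_smul 0 0 m

theorem isInternal (gm : GrModule gr M) : DirectSum.IsInternal gm.component :=
  (isInternal_submodule_iff_iSupIndep_and_iSup_eq_top
    fun σ => (gm.component σ).toIntSubmodule).2
    ⟨gm.indep.map_orderIso _, by
      rw [← map_iSup (AddSubgroup.toIntSubmodule (M := M)), gm.sup_eq_top]; rfl⟩

noncomputable instance decomposition (gm : GrModule gr M) : DirectSum.Decomposition gm.component :=
  gm.isInternal.chooseDecomposition

variable (gm : GrModule gr M)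

noncomputable def proj (σ : GArrow G) : M →+ M :=
  (gm.component σ).subtype.comp
    ((DFinsupp.evalAddMonoidHom σ).comp (decomposeAddEquiv gm.component).toAddMonoidHom)

theorem proj_apply (σ : GArrow G) (m : M) : gm.proj σ m = decompose gm.component m σ := rfl

theorem proj_mem (σ : GArrow G) (m : M) : gm.proj σ m ∈ gm.component σ :=
  (decompose gm.component m σ).2

theorem proj_of_mem_same {σ : GArrow G} {m : M} (hm : m ∈ gm.component σ) : gm.proj σ m = m :=
  decompose_of_mem_same _ hm

theorem proj_of_mem_ne {σ τ : GArrow G} {m : M} (hm : m ∈ gm.component τ) (hτσ : τ ≠ σ) :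
    gm.proj σ m = 0 :=
  decompose_of_mem_ne _ hm hτσ

theorem ext_proj {x y : M} (h : ∀ σ, gm.proj σ x = gm.proj σ y) : x = y :=
  (decompose gm.component).injective <| DirectSum.ext fun σ => Subtype.ext (h σ)

theorem proj_comp_smul {ρ σ : GArrow G} (hρσ : GArrow.Composable ρ σ) {r : R}
    (hr : r ∈ gr.component ρ) (m : M) :
    gm.proj (GArrow.comp ρ σ hρσ) (r • m) = r • gm.proj σ m := by
  induction m using Decomposition.inductionOn gm.component with
  | zero => rw [gm.smul_zero, map_zero, map_zero, gm.smul_zero]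
  | add x y hx hy => rw [gm.smul_add, map_add, map_add, hx, hy, gm.smul_add]
  | @homogeneous τ x =>
    obtain ⟨x, hx⟩ := x
    by_cases hτσ : τ = σ
    · subst hτσ
      rw [gm.proj_of_mem_same hx, gm.proj_of_mem_same (gm.smul_mem ρ τ hρσ r hr x hx)]
    rw [gm.proj_of_mem_ne hx hτσ, gm.smul_zero]
    by_cases hρτ : GArrow.Composable ρ τ
    · exact gm.proj_of_mem_ne (gm.smul_mem ρ τ hρτ r hr x hx)
        fun h => hτσ (GArrow.comp_left_cancel hρτ hρσ h)
    · rw [gm.smul_eq_zero ρ τ hρτ r hr x hx, map_zero]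

theorem isGrSubmodule_iff {N : AddSubgroup M} :
    IsGrSubmodule gm N ↔
      (∀ r : R, ∀ m ∈ N, r • m ∈ N) ∧ SetLike.IsHomogeneous gm.component N := by
  refine and_congr_right fun _ => ⟨fun hN σ m hm => ?_, fun hN => ?_⟩
  · rw [hN] at hm
    rw [← proj_apply]
    refine AddSubgroup.iSup_induction _ hm (C := fun m => gm.proj σ m ∈ N) (fun τ x hx => ?_)
      (by simp) fun x y hx hy => by simpa using N.add_mem hx hy
    by_cases hτσ : τ = σ
    · subst hτσ
      rw [gm.proj_of_mem_same hx.2]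
      exact hx.1
    · rw [gm.proj_of_mem_ne hx.2 hτσ]
      exact N.zero_mem
  · refine le_antisymm (fun m hm => ?_) (iSup_le fun σ => inf_le_left)
    rw [← sum_support_decompose gm.component m]
    exact AddSubgroup.sum_mem _ fun σ _ =>
      AddSubgroup.mem_iSup_of_mem σ ⟨hN σ hm, (decompose gm.component m σ).2⟩

noncomputable def gradedPart (π : M →+ M) : M →+ M :=
  (toAddMonoid fun σ => ((gm.proj σ).comp π).comp (gm.component σ).subtype).comp
    (decomposeAddEquiv gm.component).toAddMonoidHom

theorem gradedPart_apply_of_mem (π : M →+ M) {σ : GArrow G} {m : M} (hm : m ∈ gm.component σ) :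
    gm.gradedPart π m = gm.proj σ (π m) := by
  simp [gradedPart, decompose_of_mem _ hm]

theorem proj_gradedPart (π : M →+ M) (σ : GArrow G) (m : M) :
    gm.proj σ (gm.gradedPart π m) = gm.proj σ (π (gm.proj σ m)) := by
  induction m using Decomposition.inductionOn gm.component with
  | zero => simp
  | add x y hx hy => rw [map_add, map_add, hx, hy, map_add, map_add, map_add]
  | @homogeneous τ x =>
    obtain ⟨x, hx⟩ := x
    rw [gm.gradedPart_apply_of_mem π hx]
    by_cases hτσ : τ = σ
    · subst hτσ
      rw [gm.proj_of_mem_same (gm.proj_mem τ _), gm.proj_of_mem_same hx]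
    · rw [gm.proj_of_mem_ne (gm.proj_mem τ _) hτσ, gm.proj_of_mem_ne hx hτσ, map_zero, map_zero]

theorem gradedPart_mem {N : AddSubgroup M} (hN : SetLike.IsHomogeneous gm.component N)
    {π : M →+ M} (hπ : ∀ m, π m ∈ N) (m : M) : gm.gradedPart π m ∈ N :=
  (AddSubmonoidClass.IsHomogeneous.mem_iff gm.component N hN).2 fun σ => by
    rw [← proj_apply, proj_gradedPart]
    exact hN σ (hπ _)

theorem gradedPart_eq_self_of_mem {N : AddSubgroup M} (hN : SetLike.IsHomogeneous gm.component N)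
    {π : M →+ M} (hπ : ∀ n ∈ N, π n = n) {n : M} (hn : n ∈ N) : gm.gradedPart π n = n :=
  gm.ext_proj fun σ => by
    rw [proj_gradedPart, hπ (gm.proj σ n) (hN σ hn), gm.proj_of_mem_same (gm.proj_mem σ n)]

theorem isHomogeneous_ker_gradedPart (π : M →+ M) :
    SetLike.IsHomogeneous gm.component (gm.gradedPart π).ker := fun σ m hm => by
  rw [← proj_apply, AddMonoidHom.mem_ker, gm.gradedPart_apply_of_mem π (gm.proj_mem σ m),
    ← proj_gradedPart, hm, map_zero]

theorem gradedPart_smul {π : M →+ M} (hπ : ∀ (r : R) (m : M), π (r • m) = r • π m)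
    (r : R) (m : M) : gm.gradedPart π (r • m) = r • gm.gradedPart π m := by
  induction m using Decomposition.inductionOn gm.component with
  | zero => rw [gm.smul_zero, map_zero, gm.smul_zero]
  | add x y hx hy => rw [gm.smul_add, map_add, map_add, hx, hy, gm.smul_add]
  | @homogeneous σ x =>
    obtain ⟨x, hx⟩ := x
    rw [gm.gradedPart_apply_of_mem π hx]
    induction r using gr.induction_on with
    | homogeneous ρ r hr =>
      by_cases hρσ : GArrow.Composable ρ σ
      · rw [gm.gradedPart_apply_of_mem π (gm.smul_mem ρ σ hρσ r hr x hx), hπ,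
          gm.proj_comp_smul hρσ hr]
      · rw [gm.smul_eq_zero ρ σ hρσ r hr x hx, gm.smul_eq_zero ρ σ hρσ r hr _ (gm.proj_mem σ _),
          map_zero]
    | zero => rw [gm.zero_smul, map_zero, gm.zero_smul]
    | add r s hr hs => rw [gm.add_smul, map_add, hr, hs, gm.add_smul]

end GrModule

/-- If the underlying ungraded module `U(M)` is semisimple (every
`R`-submodule is a direct summand), then `M` is semisimple in the graded category:
every graded submodule has a graded complement. -/
theorem stmt19 {G R M : Type*} [Groupoid G] [NonUnitalRing R] [AddCommGroup M] [SMul R M]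
    (gr : OUGrading G R) (gm : GrModule gr M)
    (hss : ∀ N : AddSubgroup M, (∀ (r : R), ∀ m ∈ N, r • m ∈ N) →
      ∃ C : AddSubgroup M, (∀ (r : R), ∀ m ∈ C, r • m ∈ C) ∧ N ⊓ C = ⊥ ∧ N ⊔ C = ⊤) :
    ∀ N : AddSubgroup M, IsGrSubmodule gm N →
      ∃ C : AddSubgroup M, IsGrSubmodule gm C ∧ N ⊓ C = ⊥ ∧ N ⊔ C = ⊤ := by
  intro N hN
  obtain ⟨hNsmul, hNhom⟩ := gm.isGrSubmodule_iff.1 hN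
  obtain ⟨C₀, hC₀, hNC₀, hNC₀'⟩ := hss N hNsmul
  obtain ⟨π, hπN, hπfix, hπC₀⟩ :=
    AddSubgroup.exists_retraction_of_isCompl ⟨disjoint_iff.2 hNC₀, codisjoint_iff.2 hNC₀'⟩
  have hπsmul := AddSubgroup.map_smul_of_retraction gm.smul_add hNsmul hC₀ hNC₀' hπfix hπC₀
  have hcompl : IsCompl N (gm.gradedPart π).ker :=
    AddSubgroup.isCompl_ker_of_retraction (gm.gradedPart_mem hNhom hπN)
      fun _ => gm.gradedPart_eq_self_of_mem hNhom hπfix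
  refine ⟨_, gm.isGrSubmodule_iff.2 ⟨fun r m hm => ?_, gm.isHomogeneous_ker_gradedPart π⟩,
    hcompl.inf_eq_bot, hcompl.sup_eq_top⟩
  rw [AddMonoidHom.mem_ker, gm.gradedPart_smul hπsmul, hm, gm.smul_zero]
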